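/- PAA lower bounding lemma: let T be the piecewise aggregate approximation mapping a sequence of length ω = f·m to f dimensions by averaging over blocks of length m. Then for any sequences x, y of length ω, √m · D(T(x), T(y)) ≤ D(x, y). -/
import Mathlib


open Finset

noncomputable def lsSlope (n : ℕ) (X : Fin n → ℝ) : ℝ :=
  ((n : ℝ) * ∑ k, ((k.1 : ℝ) + 1) * X k -
      (∑ k : Fin n, ((k.1 : ℝ) + 1)) * ∑ k, X k) /
    ((n : ℝ) * ∑ k : Fin n, ((k.1 : ℝ) + 1) ^ 2 -
      (∑ k : Fin n, ((k.1 : ℝ) + 1)) ^ 2)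

noncomputable def lsIntercept (n : ℕ) (X : Fin n → ℝ) : ℝ :=
  (∑ k, X k) / n - lsSlope n X * (∑ k : Fin n, ((k.1 : ℝ) + 1)) / n

noncomputable def LD (n : ℕ) (X : Fin n → ℝ) : Fin n → ℝ :=
  fun k => X k - (lsSlope n X * ((k.1 : ℝ) + 1) + lsIntercept n X)

noncomputable def eucDist (n : ℕ) (X Y : Fin n → ℝ) : ℝ :=
  Real.sqrt (∑ k, (X k - Y k) ^ 2)

noncomputable def PAA (f m : ℕ) (x : Fin (f * m) → ℝ) : Fin f → ℝ :=
  fun i => (1 / (m : ℝ)) * ∑ j : Fin m, x ⟨i.1 * m + j.1, by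
    calc i.1 * m + j.1 < i.1 * m + m := Nat.add_lt_add_left j.2 _
    _ = (i.1 + 1) * m := by ring
    _ ≤ f * m := Nat.mul_le_mul_right m i.2⟩

theorem stmt12 (f m : ℕ) (hf : 1 ≤ f) (hm : 1 ≤ m) (x y : Fin (f * m) → ℝ) :
    Real.sqrt m * eucDist f (PAA f m x) (PAA f m y) ≤ eucDist (f * m) x y := by
  have hm0 : (0:ℝ) < m := by exact_mod_cast hm
  set d : Fin (f*m) → ℝ := fun k => x k - y k with hd
  have key : (m:ℝ) * ∑ i : Fin f, (PAA f m x i - PAA f m y i)^2 ≤ ∑ k, d k ^ 2 := by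
    have hsum : ∑ k, d k ^ 2
        = ∑ i : Fin f, ∑ j : Fin m, d (finProdFinEquiv (i, j)) ^ 2 := by
      rw [← Equiv.sum_comp finProdFinEquiv (fun k => d k ^ 2), Fintype.sum_prod_type]
    rw [hsum, Finset.mul_sum]
    apply Finset.sum_le_sum
    intro i _
    have hdiff : PAA f m x i - PAA f m y i
        = (1 / (m:ℝ)) * ∑ j : Fin m, d (finProdFinEquiv (i, j)) := by
      simp only [PAA, ← Finset.mul_sum, ← Finset.sum_sub_distrib, ← mul_sub]
      congr 1
      apply Finset.sum_congr rfl
      intro j _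
      have : (⟨i.1 * m + j.1, by
          calc i.1 * m + j.1 < i.1 * m + m := Nat.add_lt_add_left j.2 _
          _ = (i.1 + 1) * m := by ring
          _ ≤ f * m := Nat.mul_le_mul_right m i.2⟩ : Fin (f*m))
          = finProdFinEquiv (i, j) := by
        apply Fin.ext
        simp [finProdFinEquiv]
        ring
      rw [this]
    rw [hdiff, mul_pow]
    have hcs : (∑ j : Fin m, d (finProdFinEquiv (i, j))) ^ 2
        ≤ (m:ℝ) * ∑ j : Fin m, d (finProdFinEquiv (i, j)) ^ 2 := by
      have := sq_sum_le_card_mul_sum_sq (s := Finset.univ)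
        (f := fun j : Fin m => d (finProdFinEquiv (i, j)))
      simpa using this
    calc (m:ℝ) * ((1 / (m:ℝ))^2 * (∑ j : Fin m, d (finProdFinEquiv (i, j)))^2)
        ≤ (m:ℝ) * ((1 / (m:ℝ))^2 * ((m:ℝ) * ∑ j : Fin m, d (finProdFinEquiv (i, j)) ^ 2)) := by
          apply mul_le_mul_of_nonneg_left _ hm0.le
          exact mul_le_mul_of_nonneg_left hcs (by positivity)
      _ = ∑ j : Fin m, d (finProdFinEquiv (i, j)) ^ 2 := by
          field_simp
  unfold eucDist
  rw [← Real.sqrt_mul (by positivity)]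
  exact Real.sqrt_le_sqrt key
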